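/- arXiv:2003.05333 — 2 statements merged into one kernel-verified Lean document; each statement's English description precedes it below -/
import Mathlib

section
/- Let B be an atomic Boolean algebra, V a set, and f : B → Set V a Boolean algebra homomorphism (into the powerset Boolean algebra of V) such that (i) the union of f(a) over all atoms a of B equals V, and (ii) f preserves all existing suprema, i.e. whenever s is the least upper bound in B of a subset X of B, f(s) equals the union of f(x) for x in X. Then the map g from the powerset of the set of atoms of B to Set V defined by g(S) = ⋃_{a ∈ S} f(a) is a Boolean algebra homomorphism, and g({a : a is an atom of B with a ≤ b}) = f(b) for every b in B. (This is the key step showing that a complete representation of an atomic algebra B induces a representation of its completion Cm At B.) -/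
/-!
Images of distinct atoms are disjoint because `f` preserves `⊓` and `⊥`, and they cover `V`, so they
partition `V`; unions over sets of atoms of the blocks of a partition form a Boolean homomorphism.
Every `b` is the least upper bound of the atoms below it, so completeness of `f` gives
`f b = ⋃ {f a | a atom, a ≤ b}`.
-/

open Function

theorem GeneralizedBooleanAlgebra.isAtomistic_of_isAtomic {α : Type*} [GeneralizedBooleanAlgebra α]
    [IsAtomic α] : IsAtomistic α where
  isLUB_atoms b := by
    refine ⟨{a | IsAtom a ∧ a ≤ b}, ⟨fun _ ha ↦ ha.2, fun u hu ↦ ?_⟩, fun _ ha ↦ ha.1⟩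
    by_contra hbu
    obtain ⟨a, ha, hab⟩ := (eq_bot_or_exists_atom_le (b \ u)).resolve_left
      (fun h ↦ hbu (sdiff_eq_bot_iff.mp h))
    have hau : a ≤ u := hu ⟨ha, hab.trans sdiff_le⟩
    exact ha.1 ((disjoint_sdiff_self_left.mono_left hab).eq_bot_of_le hau)

theorem pairwise_disjoint_on_atoms_of_map_inf {B V : Type*} [SemilatticeInf B] [OrderBot B]
    (f : B → Set V) (hbot : f ⊥ = ∅) (hinf : ∀ a b : B, f (a ⊓ b) = f a ∩ f b) :
    Pairwise (Disjoint on fun a : {a : B // IsAtom a} ↦ f a) := by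
  intro a b hab
  have hdisj : a.val ⊓ b.val = ⊥ :=
    disjoint_iff.mp (a.2.disjoint_of_ne b.2 (Subtype.coe_ne_coe.mpr hab))
  rw [onFun, Set.disjoint_iff_inter_eq_empty, ← hinf, hdisj, hbot]

theorem biUnion_atoms_le_eq_of_map_isLUB {B V : Type*} [PartialOrder B] [OrderBot B]
    [IsAtomistic B] (f : B → Set V)
    (hcomplete : ∀ (X : Set B) (s : B), IsLUB X s → f s = ⋃ x ∈ X, f x) (b : B) : ⋃ a ∈ {a : {a : B // IsAtom a} | a.val ≤ b}, f a = f b := by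
  rw [hcomplete _ b (isLUB_atoms_le b)]
  ext
  simp [and_left_comm, and_assoc]

theorem complete_representation_induces_representation_of_completion_general
    {B : Type*} [BooleanAlgebra B] [IsAtomic B] {V : Type*}
    (f : B → Set V)
    (hbot : f ⊥ = ∅)
    (hinf : ∀ a b : B, f (a ⊓ b) = f a ∩ f b)
    (hcover : (⋃ a : {a : B // IsAtom a}, f a.val) = Set.univ)
    (hcomplete : ∀ (X : Set B) (s : B), IsLUB X s → f s = ⋃ x ∈ X, f x) :
    let g : Set {a : B // IsAtom a} → Set V := fun S => ⋃ a ∈ S, f a.val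
    g ∅ = ∅ ∧
    g Set.univ = Set.univ ∧
    (∀ S T : Set {a : B // IsAtom a}, g (S ∪ T) = g S ∪ g T) ∧
    (∀ S T : Set {a : B // IsAtom a}, g (S ∩ T) = g S ∩ g T) ∧
    (∀ S : Set {a : B // IsAtom a}, g Sᶜ = (g S)ᶜ) ∧
    (∀ b : B, g {a | a.val ≤ b} = f b) := by
  intro g
  have hdisj := pairwise_disjoint_on_atoms_of_map_inf f hbot hinf
  have : IsAtomistic B := GeneralizedBooleanAlgebra.isAtomistic_of_isAtomic
  exact ⟨Set.biUnion_empty _, (Set.biUnion_univ _).trans hcover,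
    fun S T ↦ Set.biUnion_union S T _, Set.biUnion_inter_of_pairwise_disjoint hdisj,
    fun S ↦ (Set.biUnion_compl_eq_of_pairwise_disjoint_of_iUnion_eq_univ hcover hdisj S).symm,
    biUnion_atoms_le_eq_of_map_isLUB f hcomplete⟩

/-- A complete representation of an atomic Boolean algebra `B` (a Boolean
homomorphism `f : B → Set V` whose images of atoms cover `V` and which
preserves all existing suprema) induces a representation
`g : Set (atoms of B) → Set V` of its completion `Cm At B`, given by
`g S = ⋃ a ∈ S, f a`, with `g` extending `f` via `b ↦ {atoms below b}`. -/
theorem complete_representation_induces_representation_of_completion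
    {B : Type*} [BooleanAlgebra B] [IsAtomic B] {V : Type*}
    (f : B → Set V)
    (hbot : f ⊥ = ∅)
    (htop : f ⊤ = Set.univ)
    (hsup : ∀ a b : B, f (a ⊔ b) = f a ∪ f b)
    (hinf : ∀ a b : B, f (a ⊓ b) = f a ∩ f b)
    (hcompl : ∀ a : B, f aᶜ = (f a)ᶜ)
    (hcover : (⋃ a : {a : B // IsAtom a}, f a.val) = Set.univ)
    (hcomplete : ∀ (X : Set B) (s : B), IsLUB X s → f s = ⋃ x ∈ X, f x) :
    let g : Set {a : B // IsAtom a} → Set V := fun S => ⋃ a ∈ S, f a.val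
    g ∅ = ∅ ∧
    g Set.univ = Set.univ ∧
    (∀ S T : Set {a : B // IsAtom a}, g (S ∪ T) = g S ∪ g T) ∧
    (∀ S T : Set {a : B // IsAtom a}, g (S ∩ T) = g S ∩ g T) ∧
    (∀ S : Set {a : B // IsAtom a}, g Sᶜ = (g S)ᶜ) ∧
    (∀ b : B, g {a | a.val ≤ b} = f b) :=
  complete_representation_induces_representation_of_completion_general f hbot hinf hcover hcomplete
end

section
/- Let A and B be types, U a nonempty set, f₀ : A ⊕ B → U, W the weak space determined by f₀, and c_i the cylindrifications as above. Let N = {X ⊆ W : c_{inr b} X = X for every b in B}. Then N contains ∅ and W, is closed under arbitrary unions, arbitrary intersections, and complementation within W, and the atoms of N (the minimal nonempty members of N under inclusion) are exactly the sets S_f = {g ∈ W : g(inl a) = f(inl a) for all a in A}, for f ∈ W; moreover N is atomic: every nonempty member of N includes some S_f. (In the paper's notation: the neat reduct Nr_α of the powerset algebra of a weak space of dimension α + ω is an atomic Boolean algebra whose atoms are the sets of sequences with a prescribed restriction to the first α coordinates.) -/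
/-!
A set `X` in the neat reduct is closed under changing a single `B`-coordinate, since
`c_{inr b} X = X`. A member `h` of `W` that agrees with `g ∈ X` on the `A`-coordinates differs
from `g` in only finitely many `B`-coordinates, so changing them one at a time shows `h ∈ X`.
Hence every member of the neat reduct is a union of the sets `S_f`, each of which lies in the
neat reduct itself; so the `S_f` are its atoms and it is atomic.
-/

/-- The weak space with base `U` determined by `f₀ : A ⊕ B → U`: all functions
differing from `f₀` in only finitely many coordinates. -/
def weakSpace {A B U : Type*} (f₀ : A ⊕ B → U) : Set (A ⊕ B → U) :=
  {f | {i | f i ≠ f₀ i}.Finite}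

/-- Cylindrification in direction `i` inside the weak space determined by `f₀`:
members of the weak space agreeing with some member of `X` off `i`. -/
def cyl {A B U : Type*} (f₀ : A ⊕ B → U) (i : A ⊕ B) (X : Set (A ⊕ B → U)) :
    Set (A ⊕ B → U) :=
  {f | f ∈ weakSpace f₀ ∧ ∃ g ∈ X, ∀ j : A ⊕ B, j ≠ i → f j = g j}

section NeatReduct

variable {A B U : Type*} {f₀ : A ⊕ B → U}

theorem update_mem_weakSpace [DecidableEq (A ⊕ B)] {f : A ⊕ B → U} (hf : f ∈ weakSpace f₀)
    (i : A ⊕ B) (u : U) :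
    Function.update f i u ∈ weakSpace f₀ := by
  refine (hf.insert i).subset fun j hj => ?_
  by_cases hji : j = i
  · exact Or.inl hji
  · exact Or.inr (by simpa [Function.update_of_ne hji] using hj)

theorem weakSpace_finite_ne {f g : A ⊕ B → U} (hf : f ∈ weakSpace f₀) (hg : g ∈ weakSpace f₀) :
    {i | f i ≠ g i}.Finite :=
  (hf.union hg).subset fun i hfg => by
    by_contra! h
    simp only [Set.mem_union, Set.mem_ofPred_eq, not_or, not_not] at h
    exact hfg (h.1.trans h.2.symm)

theorem subset_cyl {X : Set (A ⊕ B → U)} (hX : X ⊆ weakSpace f₀) (i : A ⊕ B) :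
    X ⊆ cyl f₀ i X :=
  fun f hf => ⟨hX hf, f, hf, fun _ _ => rfl⟩

variable (f₀) in
def neatReduct : Set (Set (A ⊕ B → U)) :=
  {X | X ⊆ weakSpace f₀ ∧ ∀ b : B, cyl f₀ (Sum.inr b) X = X}

theorem mem_neatReduct_iff {X : Set (A ⊕ B → U)} :
    X ∈ neatReduct f₀ ↔ X ⊆ weakSpace f₀ ∧ ∀ b : B, cyl f₀ (Sum.inr b) X ⊆ X :=
  and_congr_right fun hX =>
    forall_congr' fun _ => ⟨Eq.subset, fun h => h.antisymm (subset_cyl hX _)⟩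

theorem mem_of_agree_off_inr {X : Set (A ⊕ B → U)} (hX : X ∈ neatReduct f₀) {b : B}
    {g h : A ⊕ B → U} (hg : g ∈ X) (hh : h ∈ weakSpace f₀)
    (hgh : ∀ j, j ≠ Sum.inr b → h j = g j) : h ∈ X :=
  hX.2 b ▸ ⟨hh, g, hg, hgh⟩

theorem mem_of_agree_off_finset {X : Set (A ⊕ B → U)} (hX : X ∈ neatReduct f₀)
    (s : Finset B) {g h : A ⊕ B → U} (hg : g ∈ X) (hh : h ∈ weakSpace f₀)
    (hgh : ∀ j, (∀ b ∈ s, j ≠ Sum.inr b) → h j = g j) : h ∈ X := by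
  classical
  induction s using Finset.induction_on generalizing h with
  | empty => exact funext (fun j => hgh j (by simp)) ▸ hg
  | @insert b s _ ih =>
    have hh' : Function.update h (Sum.inr b) (g (Sum.inr b)) ∈ X := by
      refine ih (update_mem_weakSpace hh _ _) fun j hj => ?_
      by_cases hjb : j = Sum.inr b
      · rw [hjb, Function.update_self]
      · rw [Function.update_of_ne hjb]
        exact hgh j (by simpa [hjb] using hj)
    exact mem_of_agree_off_inr hX hh' hh fun j hj => (Function.update_of_ne hj _ _).symm

variable (f₀) in
/-- The set `S_f` of the statement. -/
def inlFiber (f : A ⊕ B → U) : Set (A ⊕ B → U) :=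
  {g | g ∈ weakSpace f₀ ∧ ∀ a : A, g (Sum.inl a) = f (Sum.inl a)}

theorem mem_inlFiber_self {f : A ⊕ B → U} (hf : f ∈ weakSpace f₀) : f ∈ inlFiber f₀ f :=
  ⟨hf, fun _ => rfl⟩

theorem inlFiber_eq_of_mem {f g : A ⊕ B → U} (hg : g ∈ inlFiber f₀ f) :
    inlFiber f₀ g = inlFiber f₀ f := by
  ext h
  exact and_congr_right fun _ => forall_congr' fun a => by rw [hg.2 a]

theorem inlFiber_mem_neatReduct (f : A ⊕ B → U) : inlFiber f₀ f ∈ neatReduct f₀ := by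
  refine mem_neatReduct_iff.2 ⟨fun g hg => hg.1, fun b => ?_⟩
  rintro h ⟨hh, g, hg, hgh⟩
  exact ⟨hh, fun a => (hgh (Sum.inl a) Sum.inl_ne_inr).trans (hg.2 a)⟩

theorem inlFiber_subset_of_mem {X : Set (A ⊕ B → U)} (hX : X ∈ neatReduct f₀)
    {g : A ⊕ B → U} (hg : g ∈ X) : inlFiber f₀ g ⊆ X := by
  rintro h ⟨hh, hgh⟩
  have hfin : {b | h (Sum.inr b) ≠ g (Sum.inr b)}.Finite :=
    (weakSpace_finite_ne hh (hX.1 hg)).preimage Sum.inr_injective.injOn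
  refine mem_of_agree_off_finset hX hfin.toFinset hg hh fun j hj => ?_
  rcases j with a | b
  · exact hgh a
  · by_contra hne
    exact hj b (hfin.mem_toFinset.2 hne) rfl

theorem empty_mem_neatReduct : (∅ : Set (A ⊕ B → U)) ∈ neatReduct f₀ :=
  mem_neatReduct_iff.2 ⟨Set.empty_subset _, fun _ _ ⟨_, _, hg, _⟩ => hg⟩

theorem weakSpace_mem_neatReduct : weakSpace f₀ ∈ neatReduct f₀ :=
  mem_neatReduct_iff.2 ⟨subset_rfl, fun _ _ hf => hf.1⟩

theorem sUnion_mem_neatReduct {𝒮 : Set (Set (A ⊕ B → U))} (h𝒮 : 𝒮 ⊆ neatReduct f₀) :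
    ⋃₀ 𝒮 ∈ neatReduct f₀ := by
  refine mem_neatReduct_iff.2 ⟨Set.sUnion_subset fun X hX => (h𝒮 hX).1, fun b => ?_⟩
  rintro f ⟨hf, g, ⟨X, hX, hg⟩, hgf⟩
  exact ⟨X, hX, mem_of_agree_off_inr (h𝒮 hX) hg hf hgf⟩

theorem sInter_mem_neatReduct {𝒮 : Set (Set (A ⊕ B → U))} (h𝒮 : 𝒮 ⊆ neatReduct f₀)
    (hne : 𝒮.Nonempty) : ⋂₀ 𝒮 ∈ neatReduct f₀ := by
  obtain ⟨X₀, hX₀⟩ := hne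
  refine mem_neatReduct_iff.2
    ⟨(Set.sInter_subset_of_mem hX₀).trans (h𝒮 hX₀).1, fun b => ?_⟩
  rintro f ⟨hf, g, hg, hgf⟩ X hX
  exact mem_of_agree_off_inr (h𝒮 hX) (hg X hX) hf hgf

theorem diff_mem_neatReduct {X : Set (A ⊕ B → U)} (hX : X ∈ neatReduct f₀) :
    weakSpace f₀ \ X ∈ neatReduct f₀ := by
  refine mem_neatReduct_iff.2 ⟨Set.sdiff_subset, fun b => ?_⟩
  rintro f ⟨hf, g, ⟨hg, hgX⟩, hgf⟩
  exact ⟨hf, fun hfX => hgX (mem_of_agree_off_inr hX hfX hg fun j hj => (hgf j hj).symm)⟩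

theorem isAtom_iff_eq_inlFiber {X : Set (A ⊕ B → U)} (hX : X ∈ neatReduct f₀) :
    (X.Nonempty ∧ ∀ Y ∈ neatReduct f₀, Y ⊆ X → Y.Nonempty → Y = X) ↔
      ∃ f ∈ weakSpace f₀, X = inlFiber f₀ f := by
  constructor
  · rintro ⟨⟨g, hg⟩, hmin⟩
    exact ⟨g, hX.1 hg, (hmin _ (inlFiber_mem_neatReduct g) (inlFiber_subset_of_mem hX hg)
      ⟨g, mem_inlFiber_self (hX.1 hg)⟩).symm⟩
  · rintro ⟨f, hf, rfl⟩
    refine ⟨⟨f, mem_inlFiber_self hf⟩, fun Y hY hYX ⟨g, hg⟩ => hYX.antisymm ?_⟩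
    exact inlFiber_eq_of_mem (hYX hg) ▸ inlFiber_subset_of_mem hY hg

end NeatReduct

theorem neat_reduct_of_weak_space_atomic_general
    {A B U : Type*} (f₀ : A ⊕ B → U) :
    let W : Set (A ⊕ B → U) := weakSpace f₀
    let N : Set (Set (A ⊕ B → U)) :=
      {X | X ⊆ W ∧ ∀ b : B, cyl f₀ (Sum.inr b) X = X}
    let S : (A ⊕ B → U) → Set (A ⊕ B → U) :=
      fun f => {g | g ∈ W ∧ ∀ a : A, g (Sum.inl a) = f (Sum.inl a)}
    (∅ ∈ N) ∧
    (W ∈ N) ∧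
    (∀ 𝒮 : Set (Set (A ⊕ B → U)), 𝒮 ⊆ N → ⋃₀ 𝒮 ∈ N) ∧
    (∀ 𝒮 : Set (Set (A ⊕ B → U)), 𝒮 ⊆ N → 𝒮.Nonempty → ⋂₀ 𝒮 ∈ N) ∧
    (∀ X ∈ N, W \ X ∈ N) ∧
    (∀ X ∈ N,
      (X.Nonempty ∧ ∀ Y ∈ N, Y ⊆ X → Y.Nonempty → Y = X) ↔ ∃ f ∈ W, X = S f) ∧
    (∀ X ∈ N, X.Nonempty → ∃ f ∈ W, S f ⊆ X) :=
  ⟨empty_mem_neatReduct, weakSpace_mem_neatReduct, fun _ => sUnion_mem_neatReduct,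
    fun _ => sInter_mem_neatReduct, fun _ => diff_mem_neatReduct,
    fun _ => isAtom_iff_eq_inlFiber,
    fun _ hX ⟨g, hg⟩ => ⟨g, hX.1 hg, inlFiber_subset_of_mem hX hg⟩⟩

/-- The neat reduct `N` (over the `A`-coordinates) of the powerset algebra of a
weak space contains `∅` and `W`, is closed under arbitrary unions, nonempty
arbitrary intersections and complementation within `W`; its atoms are exactly
the sets `S f` of members of `W` with prescribed restriction to the
`A`-coordinates, and `N` is atomic. -/
theorem neat_reduct_of_weak_space_atomic
    {A B U : Type*} [Nonempty U] (f₀ : A ⊕ B → U) :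
    let W : Set (A ⊕ B → U) := weakSpace f₀
    let N : Set (Set (A ⊕ B → U)) :=
      {X | X ⊆ W ∧ ∀ b : B, cyl f₀ (Sum.inr b) X = X}
    let S : (A ⊕ B → U) → Set (A ⊕ B → U) :=
      fun f => {g | g ∈ W ∧ ∀ a : A, g (Sum.inl a) = f (Sum.inl a)}
    (∅ ∈ N) ∧
    (W ∈ N) ∧
    (∀ 𝒮 : Set (Set (A ⊕ B → U)), 𝒮 ⊆ N → ⋃₀ 𝒮 ∈ N) ∧
    (∀ 𝒮 : Set (Set (A ⊕ B → U)), 𝒮 ⊆ N → 𝒮.Nonempty → ⋂₀ 𝒮 ∈ N) ∧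
    (∀ X ∈ N, W \ X ∈ N) ∧
    (∀ X ∈ N,
      (X.Nonempty ∧ ∀ Y ∈ N, Y ⊆ X → Y.Nonempty → Y = X) ↔ ∃ f ∈ W, X = S f) ∧
    (∀ X ∈ N, X.Nonempty → ∃ f ∈ W, S f ⊆ X) :=
  neat_reduct_of_weak_space_atomic_general f₀
end
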